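/- arXiv:2404.03409 — 2 statements merged into one kernel-verified Lean document; each statement's English description precedes it below -/
import Mathlib

section
/- Let a, b, ω > 0 and σ = −a²b. If φ = (x, y) : [0, ∞) → ℝ² is a solution of the bistable oscillator with x(0)² + y(0)² > a, then t ↦ x(t)² + y(t)² is nonincreasing, stays > a for all t ≥ 0, and converges to a as t → ∞; i.e., the limit cycle {x² + y² = a} attracts all trajectories starting outside it (it is semi-stable). -/
/-! Along a trajectory, `r = x² + y²` satisfies the radial equation `ṙ = 2 r g(r) = -2b r (r - a)²`.
The quantity `r - a` solves the linear equation `u' = c(t) u` with `c = -2b r (r - a)`, so by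
uniqueness it cannot vanish in finite time; hence `r > a`, and then `ṙ ≤ 0`. The monotone limit of
`r` must be a zero of the right-hand side `-2b s (s - a)²` that is `≥ a`, i.e. `a`. -/

open Set Filter Topology

theorem hasDerivAt_sq_add_sq_of_rotation {x y : ℝ → ℝ} {ω G t : ℝ}
    (hx : HasDerivAt x (-ω * y t + x t * G) t) (hy : HasDerivAt y (ω * x t + y t * G) t) :
    HasDerivAt (fun t => x t ^ 2 + y t ^ 2) (2 * (x t ^ 2 + y t ^ 2) * G) t :=
  ((hx.pow 2).add (hy.pow 2)).congr_deriv (by push_cast; ring)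

theorem eqOn_zero_of_hasDerivAt_mul_of_eq_zero_right {u c : ℝ → ℝ} {t₀ t₁ : ℝ}
    (hc : ContinuousOn c (Icc t₀ t₁)) (hu : ∀ t ∈ Icc t₀ t₁, HasDerivAt u (c t * u t) t)
    (h₁ : u t₁ = 0) : EqOn u 0 (Icc t₀ t₁) := by
  obtain ⟨C, hC⟩ := isCompact_Icc.exists_bound_of_continuousOn hc
  have hlip : ∀ t ∈ Ioc t₀ t₁, LipschitzOnWith C.toNNReal (c t * ·) univ := fun t ht =>
    ((lipschitzWith_smul (c t)).weaken (by
      rw [← NNReal.coe_le_coe, coe_nnnorm, Real.coe_toNNReal']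
      exact (hC t (Ioc_subset_Icc_self ht)).trans (le_max_left _ _))).lipschitzOnWith
  refine ODE_solution_unique_of_mem_Icc_left hlip
    (fun t ht => (hu t ht).continuousAt.continuousWithinAt)
    (fun t ht => (hu t (Ioc_subset_Icc_self ht)).hasDerivWithinAt) (fun _ _ => mem_univ _)
    continuousOn_const (fun t _ => ?_) (fun _ _ => mem_univ _) h₁
  rw [Pi.zero_apply, mul_zero]
  exact hasDerivWithinAt_const t (Iic t) 0

theorem AntitoneOn.exists_tendsto_atTop {f : ℝ → ℝ} {t₀ : ℝ} (hf : AntitoneOn f (Ici t₀))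
    (hbdd : BddBelow (f '' Ici t₀)) : ∃ L, Tendsto f atTop (𝓝 L) := by
  have hanti : Antitone fun t => f (max t t₀) := fun s t hst =>
    hf (le_max_right s t₀) (le_max_right t t₀) (max_le_max_right t₀ hst)
  have hbdd' : BddBelow (range fun t => f (max t t₀)) :=
    hbdd.mono (range_subset_iff.2 fun t => mem_image_of_mem f (le_max_right t t₀))
  refine ⟨_, (tendsto_atTop_ciInf hanti hbdd').congr' ?_⟩
  filter_upwards [eventually_ge_atTop t₀] with t ht
  rw [max_eq_left ht]

theorem eq_zero_of_tendsto_of_tendsto_deriv {f f' : ℝ → ℝ} {t₀ L l : ℝ}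
    (hf : ∀ t ≥ t₀, HasDerivAt f (f' t) t) (hL : Tendsto f atTop (𝓝 L))
    (hl : Tendsto f' atTop (𝓝 l)) : l = 0 := by
  have hmvt : ∀ t, ∃ ξ ∈ Ioo (max t t₀) (max t t₀ + 1),
      f' ξ = (f (max t t₀ + 1) - f (max t t₀)) / (max t t₀ + 1 - max t t₀) := fun t =>
    exists_hasDerivAt_eq_slope f f' (lt_add_one _)
      (fun s hs => (hf s ((le_max_right t t₀).trans hs.1)).continuousAt.continuousWithinAt)
      (fun s hs => hf s ((le_max_right t t₀).trans hs.1.le))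
  choose ξ hξmem hξslope using hmvt
  have hs : Tendsto (fun t => max t t₀) atTop atTop :=
    tendsto_atTop_mono (le_max_left · t₀) tendsto_id
  have hξ : Tendsto ξ atTop atTop :=
    tendsto_atTop_mono (fun t => (le_max_left t t₀).trans (hξmem t).1.le) tendsto_id
  have hslope : Tendsto (fun t => f' (ξ t)) atTop (𝓝 (L - L)) := by
    simp only [hξslope, add_sub_cancel_left, div_one]
    exact (hL.comp (tendsto_atTop_add_const_right _ 1 hs)).sub (hL.comp hs)
  rw [sub_self] at hslope
  exact tendsto_nhds_unique (hl.comp hξ) hslope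

section RadialEquation

variable {a b : ℝ} {r : ℝ → ℝ}

theorem lt_of_hasDerivAt_radial (hr : ∀ t ≥ 0, HasDerivAt r (-2 * b * r t * (r t - a) ^ 2) t)
    (h0 : a < r 0) : ∀ t ≥ 0, a < r t := by
  intro t₁ ht₁
  by_contra! h₁
  obtain ⟨T, hT, hrT⟩ : ∃ T ∈ Icc 0 t₁, r T = a :=
    intermediate_value_Icc' ht₁
      (fun t ht => (hr t ht.1).continuousAt.continuousWithinAt) ⟨h₁, h0.le⟩
  have hcont : ContinuousOn r (Icc 0 T) :=
    fun t ht => (hr t ht.1).continuousAt.continuousWithinAt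
  have hzero := eqOn_zero_of_hasDerivAt_mul_of_eq_zero_right
    (u := fun t => r t - a) (c := fun t => -2 * b * r t * (r t - a))
    ((continuousOn_const.mul hcont).mul (hcont.sub continuousOn_const))
    (fun t ht => ((hr t ht.1).sub_const a).congr_deriv (by ring)) (sub_eq_zero.2 hrT)
    (left_mem_Icc.2 hT.1)
  exact h0.ne' (sub_eq_zero.1 hzero)

theorem antitoneOn_of_hasDerivAt_radial (ha : 0 < a) (hb : 0 ≤ b)
    (hr : ∀ t ≥ 0, HasDerivAt r (-2 * b * r t * (r t - a) ^ 2) t) (h0 : a < r 0) :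
    AntitoneOn r (Ici 0) := by
  refine antitoneOn_of_hasDerivWithinAt_nonpos (convex_Ici 0)
    (fun t ht => (hr t ht).continuousAt.continuousWithinAt)
    (fun t ht => (hr t (interior_subset ht)).hasDerivWithinAt) (fun t ht => ?_)
  have hrt := ha.trans (lt_of_hasDerivAt_radial hr h0 t (interior_subset ht))
  have : 0 ≤ b * r t * (r t - a) ^ 2 := by positivity
  linarith

theorem tendsto_of_hasDerivAt_radial (ha : 0 < a) (hb : 0 < b)
    (hr : ∀ t ≥ 0, HasDerivAt r (-2 * b * r t * (r t - a) ^ 2) t) (h0 : a < r 0) :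
    Tendsto r atTop (𝓝 a) := by
  have hgt := lt_of_hasDerivAt_radial hr h0
  obtain ⟨L, hL⟩ := (antitoneOn_of_hasDerivAt_radial ha hb.le hr h0).exists_tendsto_atTop
    ⟨a, forall_mem_image.2 fun t ht => (hgt t ht).le⟩
  have haL : a ≤ L := ge_of_tendsto hL (eventually_atTop.2 ⟨0, fun t ht => (hgt t ht).le⟩)
  have hfield : Continuous fun s : ℝ => -2 * b * s * (s - a) ^ 2 := by fun_prop
  have hL0 := eq_zero_of_tendsto_of_tendsto_deriv hr hL ((hfield.tendsto L).comp hL)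
  have hLa : L - a = 0 := by
    simpa [hb.ne', (ha.trans_le haL).ne'] using hL0
  rwa [sub_eq_zero.1 hLa] at hL

end RadialEquation

theorem stmt_3_general (a b ω σ : ℝ) (ha : 0 < a) (hb : 0 < b)
    (hσ : σ = -a ^ 2 * b)
    (x y : ℝ → ℝ)
    (hx : ∀ t ≥ (0 : ℝ), HasDerivAt x
      (-ω * y t + x t * (σ + 2 * a * b * (x t ^ 2 + y t ^ 2) - b * (x t ^ 2 + y t ^ 2) ^ 2)) t)
    (hy : ∀ t ≥ (0 : ℝ), HasDerivAt y
      (ω * x t + y t * (σ + 2 * a * b * (x t ^ 2 + y t ^ 2) - b * (x t ^ 2 + y t ^ 2) ^ 2)) t)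
    (h0 : a < x 0 ^ 2 + y 0 ^ 2) :
    AntitoneOn (fun t => x t ^ 2 + y t ^ 2) (Set.Ici (0 : ℝ)) ∧
    (∀ t ≥ (0 : ℝ), a < x t ^ 2 + y t ^ 2) ∧
    Filter.Tendsto (fun t => x t ^ 2 + y t ^ 2) Filter.atTop (nhds a) := by
  have hr : ∀ t ≥ (0 : ℝ), HasDerivAt (fun t => x t ^ 2 + y t ^ 2)
      (-2 * b * (x t ^ 2 + y t ^ 2) * (x t ^ 2 + y t ^ 2 - a) ^ 2) t := fun t ht =>
    (hasDerivAt_sq_add_sq_of_rotation (hx t ht) (hy t ht)).congr_deriv (by rw [hσ]; ring)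
  exact ⟨antitoneOn_of_hasDerivAt_radial ha hb.le hr h0, lt_of_hasDerivAt_radial hr h0,
    tendsto_of_hasDerivAt_radial ha hb hr h0⟩

/-- for σ = -a²b the circle x²+y² = a attracts all trajectories starting outside. -/
theorem stmt_3 (a b ω σ : ℝ) (ha : 0 < a) (hb : 0 < b) (hω : 0 < ω)
    (hσ : σ = -a ^ 2 * b)
    (x y : ℝ → ℝ)
    (hx : ∀ t ≥ (0 : ℝ), HasDerivAt x
      (-ω * y t + x t * (σ + 2 * a * b * (x t ^ 2 + y t ^ 2) - b * (x t ^ 2 + y t ^ 2) ^ 2)) t)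
    (hy : ∀ t ≥ (0 : ℝ), HasDerivAt y
      (ω * x t + y t * (σ + 2 * a * b * (x t ^ 2 + y t ^ 2) - b * (x t ^ 2 + y t ^ 2) ^ 2)) t)
    (h0 : a < x 0 ^ 2 + y 0 ^ 2) :
    AntitoneOn (fun t => x t ^ 2 + y t ^ 2) (Set.Ici (0 : ℝ)) ∧
    (∀ t ≥ (0 : ℝ), a < x t ^ 2 + y t ^ 2) ∧
    Filter.Tendsto (fun t => x t ^ 2 + y t ^ 2) Filter.atTop (nhds a) :=
  stmt_3_general a b ω σ ha hb hσ x y hx hy h0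
end

section
/- Let a, b, ω > 0, −a²b < σ < 0, μ ∈ (0, 1), and ε ∈ (0, 1), and set γ_μ = √(a² + (1−μ)σ/b). Let u = (u₁, u₂) : [0, ∞) → ℝ² be continuous with U := sup_{t≥0} ‖u(t)‖ < (1−ε)·μ·|σ|·√(a − γ_μ), and let φ = (x, y) : [0, ∞) → ℝ² be a solution of the forced bistable oscillator with x(0)² + y(0)² < a − γ_μ. Then limsup_{t→∞} ‖φ(t)‖ ≤ U / ((1−ε)·μ·|σ|): the trajectory is ultimately bounded by U/((1−ε)μ|σ|). -/
/-!
With `V = x² + y²`, the rotation terms cancel in `V'` and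
`V' = 2 V g(V) + 2 ⟨φ, u⟩ ≤ 2 √V (U - μ|σ| √V)` as long as `V ≤ a - γ_μ`, because `g ≤ μσ` on
`[0, a - γ_μ]`. At any level `c² ≤ a - γ_μ` with `μ|σ| c > U` the right-hand side is negative, so
these sublevel sets are forward invariant; above such a level `V` decreases at a uniform rate, so
it enters the sublevel set in finite time. Letting `c` decrease to `U / ((1 - ε) μ |σ|)` bounds
the `limsup`.
-/

open Filter Set

lemma le_of_hasDerivAt_neg_of_eq {f f' : ℝ → ℝ} {t₀ c : ℝ}
    (hf : ∀ t ≥ t₀, HasDerivAt f (f' t) t) (hc : ∀ t ≥ t₀, f t = c → f' t < 0)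
    (h₀ : f t₀ ≤ c) : ∀ t ≥ t₀, f t ≤ c := fun _ ht =>
  image_le_of_deriv_right_lt_deriv_boundary (B := fun _ => c) (B' := 0)
    (fun s hs => (hf s hs.1).continuousAt.continuousWithinAt)
    (fun s hs => (hf s hs.1).hasDerivWithinAt) h₀ (fun _ => hasDerivAt_const _ _)
    (fun s hs => hc s hs.1) ⟨ht, le_rfl⟩

lemma le_sub_mul_of_hasDerivAt_le {f f' : ℝ → ℝ} {t₀ κ : ℝ}
    (hf : ∀ t ≥ t₀, HasDerivAt f (f' t) t) (hd : ∀ t ≥ t₀, f' t ≤ -κ) :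
    ∀ t ≥ t₀, f t ≤ f t₀ - κ * (t - t₀) := fun _ ht =>
  image_le_of_deriv_right_le_deriv_boundary (B := fun s => f t₀ - κ * (s - t₀)) (B' := fun _ => -κ)
    (fun s hs => (hf s hs.1).continuousAt.continuousWithinAt)
    (fun s hs => (hf s hs.1).hasDerivWithinAt) (by simp) (by fun_prop)
    (fun s _ => by simpa using (((hasDerivAt_id s).sub_const t₀).const_mul κ).const_sub (f t₀)
      |>.hasDerivWithinAt)
    (fun s hs => hd s hs.1) ⟨ht, le_rfl⟩

section DifferentialInequality

variable {V V' : ℝ → ℝ} {K M U c : ℝ}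
  (hV : ∀ t ≥ 0, HasDerivAt V (V' t) t)
  (hV' : ∀ t ≥ 0, V t ≤ K → V' t ≤ 2 * √(V t) * (U - M * √(V t)))
include hV hV'

lemma le_sq_of_deriv_le (hc : 0 < c) (hcK : c ^ 2 ≤ K) (hUc : U < M * c) {t₀ : ℝ}
    (ht₀ : 0 ≤ t₀) (h : V t₀ ≤ c ^ 2) : ∀ t ≥ t₀, V t ≤ c ^ 2 := by
  refine le_of_hasDerivAt_neg_of_eq (fun t ht => hV t (ht₀.trans ht)) (fun t ht hVt => ?_) h
  have := hV' t (ht₀.trans ht) (hVt ▸ hcK)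
  rw [hVt, Real.sqrt_sq hc.le] at this
  nlinarith

lemma exists_le_sq_of_deriv_le (hM : 0 < M) (hinv : ∀ t ≥ 0, V t ≤ K) (hc : 0 < c)
    (hUc : U < M * c) : ∃ t ≥ 0, V t ≤ c ^ 2 := by
  by_contra! h
  set κ := 2 * c * (M * c - U)
  have hκ : 0 < κ := by positivity
  have hdecay : ∀ t ≥ 0, V' t ≤ -κ := by
    intro t ht
    have hcr : c ≤ √(V t) := Real.le_sqrt_of_sq_le (h t ht).le
    -- `r ↦ 2 r (U - M r)` is decreasing on `[c, ∞)` since `c > U / M`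
    nlinarith [hV' t ht (hinv t ht), mul_nonneg (sub_nonneg.2 hcr) hM.le]
  have hT : 0 ≤ (V 0 - c ^ 2) / κ + 1 := by
    have := div_nonneg (sub_nonneg.2 (h 0 le_rfl).le) hκ.le
    linarith
  have hVT := le_sub_mul_of_hasDerivAt_le hV hdecay _ hT
  rw [sub_zero, mul_add, mul_div_cancel₀ _ hκ.ne'] at hVT
  linarith [h _ hT]

lemma eventually_sqrt_le_of_deriv_le (hM : 0 < M) (hinv : ∀ t ≥ 0, V t ≤ K) (hc : 0 < c)
    (hcK : c ^ 2 ≤ K) (hUc : U < M * c) : ∀ᶠ t in atTop, √(V t) ≤ c := by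
  obtain ⟨t₀, ht₀, h⟩ := exists_le_sq_of_deriv_le hV hV' hM hinv hc hUc
  filter_upwards [eventually_ge_atTop t₀] with t ht
  exact (Real.sqrt_le_left hc.le).2 (le_sq_of_deriv_le hV hV' hc hcK hUc ht₀ h t ht)

theorem limsup_sqrt_le_of_deriv_le (hM : 0 < M) (hU : 0 ≤ U) (hUK : U < M * √K)
    (h₀ : V 0 ≤ K) : limsup (fun t => √(V t)) atTop ≤ U / M := by
  have hK : 0 < √K := pos_of_mul_pos_right (hU.trans_lt hUK) hM.le
  have hK₀ : 0 ≤ K := (Real.sqrt_pos.1 hK).le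
  have hinv : ∀ t ≥ 0, V t ≤ K := by
    simpa only [Real.sq_sqrt hK₀] using
      le_sq_of_deriv_le hV hV' hK (Real.sq_sqrt hK₀).le hUK le_rfl (by rwa [Real.sq_sqrt hK₀])
  refine le_of_forall_gt_imp_ge_of_dense fun c hc => ?_
  set c' := min c √K
  have hUc' : U < M * c' := by
    rw [← div_lt_iff₀' hM]
    exact lt_min hc ((div_lt_iff₀' hM).2 hUK)
  have hc' : 0 < c' := lt_min ((div_nonneg hU hM.le).trans_lt hc) hK
  have hc'K : c' ^ 2 ≤ K := (Real.le_sqrt hc'.le hK₀).1 (min_le_right _ _)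
  refine limsup_le_of_le (isCoboundedUnder_le_of_le atTop fun t => Real.sqrt_nonneg _) ?_
  filter_upwards [eventually_sqrt_le_of_deriv_le hV hV' hM hinv hc' hc'K hUc'] with t ht
  exact ht.trans (min_le_left _ _)

end DifferentialInequality

lemma hasDerivAt_sq_add_sq {x y : ℝ → ℝ} {t ω G u v : ℝ}
    (hx : HasDerivAt x (-ω * y t + x t * G + u) t) (hy : HasDerivAt y (ω * x t + y t * G + v) t) :
    HasDerivAt (fun s => x s ^ 2 + y s ^ 2)
      (2 * (x t ^ 2 + y t ^ 2) * G + 2 * (x t * u + y t * v)) t :=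
  ((hx.fun_pow 2).fun_add (hy.fun_pow 2)).congr_deriv (by push_cast; ring)

lemma mul_add_mul_le_sqrt_mul_sqrt (x y u v : ℝ) :
    x * u + y * v ≤ √(x ^ 2 + y ^ 2) * √(u ^ 2 + v ^ 2) := by
  rw [← Real.sqrt_mul (by positivity)]
  exact (le_abs_self _).trans <| Real.abs_le_sqrt <| by nlinarith [sq_nonneg (x * v - y * u)]

lemma sq_add_sq_rate_le {x y u v G U m : ℝ} (hG : G ≤ -m) (hu : √(u ^ 2 + v ^ 2) ≤ U) :
    2 * (x ^ 2 + y ^ 2) * G + 2 * (x * u + y * v) ≤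
      2 * √(x ^ 2 + y ^ 2) * (U - m * √(x ^ 2 + y ^ 2)) := by
  calc 2 * (x ^ 2 + y ^ 2) * G + 2 * (x * u + y * v)
      ≤ 2 * (x ^ 2 + y ^ 2) * (-m) + 2 * (√(x ^ 2 + y ^ 2) * U) := by
        gcongr
        exact (mul_add_mul_le_sqrt_mul_sqrt x y u v).trans (by gcongr)
    _ = 2 * √(x ^ 2 + y ^ 2) * (U - m * √(x ^ 2 + y ^ 2)) := by
        linear_combination (2 * m) * Real.sq_sqrt (by positivity : 0 ≤ x ^ 2 + y ^ 2)

lemma bistable_le_of_le_sub_sqrt {a b σ μ s : ℝ} (hb : 0 < b)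
    (hsa : s ≤ a - √(a ^ 2 + (1 - μ) * σ / b)) :
    σ + 2 * a * b * s - b * s ^ 2 ≤ μ * σ := by
  set γ := √(a ^ 2 + (1 - μ) * σ / b)
  have hγ : a ^ 2 + (1 - μ) * σ / b ≤ γ ^ 2 := Real.sq_sqrt' ▸ le_max_left _ _
  have hγs : γ ^ 2 ≤ (a - s) ^ 2 := pow_le_pow_left₀ (Real.sqrt_nonneg _) (by linarith) 2
  have key : b * a ^ 2 + (1 - μ) * σ ≤ b * (a - s) ^ 2 := by
    have := mul_le_mul_of_nonneg_left (hγ.trans hγs) hb.le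
    rwa [mul_add, mul_div_cancel₀ _ hb.ne'] at this
  nlinarith

theorem stmt_13_general (a b ω σ μ ε : ℝ) (hb : 0 < b) (hσ2 : σ < 0)
    (hμ : μ ∈ Set.Ioo (0 : ℝ) 1) (hε : ε ∈ Set.Ioo (0 : ℝ) 1)
    (u1 u2 : ℝ → ℝ) (U : ℝ) (hU : ∀ t ≥ (0 : ℝ), Real.sqrt (u1 t ^ 2 + u2 t ^ 2) ≤ U)
    (hUb : U < (1 - ε) * μ * |σ| * Real.sqrt (a - Real.sqrt (a ^ 2 + (1 - μ) * σ / b)))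
    (x y : ℝ → ℝ)
    (hx : ∀ t ≥ (0 : ℝ), HasDerivAt x
      (-ω * y t + x t * (σ + 2 * a * b * (x t ^ 2 + y t ^ 2) - b * (x t ^ 2 + y t ^ 2) ^ 2)
        + u1 t) t)
    (hy : ∀ t ≥ (0 : ℝ), HasDerivAt y
      (ω * x t + y t * (σ + 2 * a * b * (x t ^ 2 + y t ^ 2) - b * (x t ^ 2 + y t ^ 2) ^ 2)
        + u2 t) t)
    (h0 : x 0 ^ 2 + y 0 ^ 2 < a - Real.sqrt (a ^ 2 + (1 - μ) * σ / b)) :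
    Filter.limsup (fun t => Real.sqrt (x t ^ 2 + y t ^ 2)) Filter.atTop ≤
      U / ((1 - ε) * μ * |σ|) := by
  obtain ⟨hμ0, -⟩ := hμ
  obtain ⟨hε0, hε1⟩ := hε
  have hM : 0 < (1 - ε) * μ * |σ| := by
    have := sub_pos.2 hε1; have := abs_pos.2 hσ2.ne; positivity
  have hMσ : μ * σ ≤ -((1 - ε) * μ * |σ|) := by
    rw [abs_of_neg hσ2]; nlinarith [mul_pos hε0 hμ0]
  refine limsup_sqrt_le_of_deriv_le (fun t ht => hasDerivAt_sq_add_sq (hx t ht) (hy t ht))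
    (fun t ht hVK => sq_add_sq_rate_le ?_ (hU t ht)) hM
    ((Real.sqrt_nonneg _).trans (hU 0 le_rfl)) hUb h0.le
  exact (bistable_le_of_le_sub_sqrt hb hVK).trans hMσ

/-- ultimate boundedness of forced trajectories by U/((1-ε)μ|σ|). -/
theorem stmt_13 (a b ω σ μ ε : ℝ) (ha : 0 < a) (hb : 0 < b) (hω : 0 < ω)
    (hσ1 : -a ^ 2 * b < σ) (hσ2 : σ < 0)
    (hμ : μ ∈ Set.Ioo (0 : ℝ) 1) (hε : ε ∈ Set.Ioo (0 : ℝ) 1)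
    (u1 u2 : ℝ → ℝ) (hu1 : Continuous u1) (hu2 : Continuous u2)
    (U : ℝ) (hU : ∀ t ≥ (0 : ℝ), Real.sqrt (u1 t ^ 2 + u2 t ^ 2) ≤ U)
    (hUb : U < (1 - ε) * μ * |σ| * Real.sqrt (a - Real.sqrt (a ^ 2 + (1 - μ) * σ / b)))
    (x y : ℝ → ℝ)
    (hx : ∀ t ≥ (0 : ℝ), HasDerivAt x
      (-ω * y t + x t * (σ + 2 * a * b * (x t ^ 2 + y t ^ 2) - b * (x t ^ 2 + y t ^ 2) ^ 2)
        + u1 t) t)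
    (hy : ∀ t ≥ (0 : ℝ), HasDerivAt y
      (ω * x t + y t * (σ + 2 * a * b * (x t ^ 2 + y t ^ 2) - b * (x t ^ 2 + y t ^ 2) ^ 2)
        + u2 t) t)
    (h0 : x 0 ^ 2 + y 0 ^ 2 < a - Real.sqrt (a ^ 2 + (1 - μ) * σ / b)) :
    Filter.limsup (fun t => Real.sqrt (x t ^ 2 + y t ^ 2)) Filter.atTop ≤
      U / ((1 - ε) * μ * |σ|) :=
  stmt_13_general a b ω σ μ ε hb hσ2 hμ hε u1 u2 U hU hUb x y hx hy h0
end
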